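/- Let H0, H* ∈ H^stub_s(d) such that M(H0 Δ H*) consists of exactly one minimal alternating cycle C* containing an alternating subtrail (e1, e2, e3) with e1 = {a,b}_{H0,t}, e2 = {b,c}_{H*,t}, e3 = {c,d}_{H0,s} and a ≠ d. If the edge e4 = {a,d}_{H*,s} belongs to C*, then C* = (e1, e2, e3, e4), so |A(H0) Δ A(H*)| = 4, the number of tail-τ edges labeled H0 in M(H0 Δ H*) equals the number of tail-τ edges labeled H*, and H0 and H* are adjacent in G(H^stub_s(d)). -/

import Mathlib

open Finset

/-!
Common setting: fix a vertex set `V` and two tail labels `τ, σ`, encoded as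
`Bool` with `true = τ` and `false = σ`.  A hyperarc is a pair `(t, {a,b})`
consisting of a tail label and an unordered pair of vertices; it is degenerate
if `a = b`.  A hypergraph is a finite set of pairwise distinct non-degenerate
hyperarcs; `H^stub_s(d)` is the set of such hypergraphs realizing the degree
sequence `d` (stub degree of each vertex and number of hyperarcs per tail).
`M(H0 Δ H*)` is the edge-labeled multigraph whose edges record the hyperarcs
of the symmetric difference together with the hypergraph (`lab`, `true = H0`)
containing them and their tail.
-/

/-- Tail labels: `true = τ`, `false = σ`. -/
abbrev Tail := Bool

/-- A hyperarc: a tail label together with an unordered pair of vertices. -/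
abbrev Hyperarc (V : Type*) := Tail × Sym2 V

/-- A (stub) degree sequence: the stub degree of every vertex together with the
number of hyperarcs carrying each tail label. -/
structure DegreeSeq (V : Type*) where
  vdeg : V → ℕ
  tdeg : Tail → ℕ

/-- `A` is a hypergraph in `H^stub_s(d)`: a set of pairwise distinct (this is
automatic for a `Finset`) non-degenerate hyperarcs realizing the degree
sequence `D`. -/
def Realizes {V : Type*} [DecidableEq V] (A : Finset (Hyperarc V)) (D : DegreeSeq V) : Prop :=
  (∀ e ∈ A, ¬ e.2.IsDiag) ∧
  (∀ v : V, (A.filter fun e => v ∈ e.2).card = D.vdeg v) ∧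
  (∀ t : Tail, (A.filter fun e => e.1 = t).card = D.tdeg t)

/-- An edge `{a,b}_{X,t}` of the multigraph `M(H0 Δ H*)`: its label (`true`
means it comes from `H0`, `false` from `H*`), its tail `t` and its endpoints
`{a,b}`. -/
structure MEdge (V : Type*) where
  lab : Bool
  tail : Tail
  ends : Sym2 V
deriving DecidableEq

/-- `M⁻¹`: the hyperarc underlying an edge of `M(H0 Δ H*)`. -/
def MEdge.arc {V : Type*} (e : MEdge V) : Hyperarc V := (e.tail, e.ends)

/-- The edge set of the edge-labeled multigraph `M(H0 Δ H*)`: every hyperarc of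
`A(H0) \ A(H*)` becomes an edge labeled `H0` (i.e. `true`) and every hyperarc of
`A(H*) \ A(H0)` becomes an edge labeled `H*` (i.e. `false`). -/
def mEdges {V : Type*} [DecidableEq V] (A0 A1 : Finset (Hyperarc V)) : Finset (MEdge V) :=
  ((A0 \ A1).image fun h => ⟨true, h.1, h.2⟩) ∪
    ((A1 \ A0).image fun h => ⟨false, h.1, h.2⟩)

/-- An alternating cycle in the edge set `E` of `M(H0 Δ H*)`: a closed trail
(cyclic sequence of pairwise distinct edges, consecutive edges sharing an
endpoint) whose edges alternate between label `H0` and label `H*`. -/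
structure AltCycle {V : Type*} (E : Finset (MEdge V)) where
  /-- the length of the cycle -/
  n : ℕ
  two_le : 2 ≤ n
  /-- the cyclic sequence of edges -/
  edge : ℕ → MEdge V
  /-- the cyclic sequence of vertices visited -/
  vert : ℕ → V
  edge_periodic : ∀ i, edge (i + n) = edge i
  vert_periodic : ∀ i, vert (i + n) = vert i
  mem : ∀ i, edge i ∈ E
  inj : ∀ i < n, ∀ j < n, edge i = edge j → i = j
  ends_eq : ∀ i, (edge i).ends = s(vert i, vert (i + 1))
  alt : ∀ i, (edge i).lab = !(edge (i + 1)).lab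

/-- The set of edges used by an alternating cycle. -/
def AltCycle.edges {V : Type*} [DecidableEq V] {E : Finset (MEdge V)} (C : AltCycle E) :
    Finset (MEdge V) :=
  (Finset.range C.n).image C.edge

/-- A minimal alternating cycle: one containing no proper alternating subcycle. -/
def AltCycle.Minimal {V : Type*} [DecidableEq V] {E : Finset (MEdge V)} (C : AltCycle E) : Prop :=
  ∀ C' : AltCycle E, C'.edges ⊆ C.edges → C'.edges = C.edges

/-- `|f_{X,t}(M(H0 Δ H*))|`: the number of edges of `M(H0 Δ H*)` labeled with
hypergraph `l` (`true = H0`) and tail `t`. -/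
def labTailCount {V : Type*} [DecidableEq V] (A0 A1 : Finset (Hyperarc V))
    (l : Bool) (t : Tail) : ℕ :=
  ((mEdges A0 A1).filter fun e => e.lab = l ∧ e.tail = t).card

/-- `H` and `H'` differ by a single hypershuffle move, i.e. they are adjacent in
`G(H^stub_s(d))`: their symmetric difference consists of 4 hyperarcs,
`M(H Δ H')` is an alternating cycle, and the number of tail-τ edges labeled `H`
equals the number of tail-τ edges labeled `H'`. -/
def HypershuffleAdj {V : Type*} [DecidableEq V] (A0 A1 : Finset (Hyperarc V)) : Prop :=
  ((A0 \ A1) ∪ (A1 \ A0)).card = 4 ∧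
  (∃ C : AltCycle (mEdges A0 A1), C.edges = mEdges A0 A1) ∧
  labTailCount A0 A1 true true = labTailCount A0 A1 false true

/-!
Consecutive edges of an alternating trail carry different labels, so the edges
`e1 = {a,b}_{H0,t}`, `e2 = {b,c}_{H*,t}`, `e3 = {c,d}_{H0,s}`, `e4 = {a,d}_{H*,s}` are pairwise
distinct once `e1 ≠ e3` and `e2 ≠ e4`. If `e1 = e3`, then `a ≠ d` forces `c = a` and `d = b`, so
`e2` would carry the hyperarc of `e1` with the other label, which `M(H0 Δ H*)` never contains; if
`e2 = e4`, then `e1` would be degenerate or equal to `e3`. Hence `(e1, e2, e3, e4)` is an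
alternating cycle inside `C*`, and minimality makes it all of `C*`, i.e. all of `M(H0 Δ H*)`.
Both counts follow: `M(H0 Δ H*)` has one edge per hyperarc of the symmetric difference, and the
`H0`-edges `e1, e3` have the same tails `t, s` as the `H*`-edges `e2, e4`.
-/

section

variable {V : Type*}

namespace AltCycle

open Fin.NatCast

def ofFin {E : Finset (MEdge V)} (n : ℕ) [NeZero n] (hn : 2 ≤ n) (e : Fin n → MEdge V)
    (v : Fin n → V) (hmem : ∀ k, e k ∈ E) (hinj : Function.Injective e)
    (hends : ∀ k, (e k).ends = s(v k, v (k + 1))) (halt : ∀ k, (e k).lab = !(e (k + 1)).lab) :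
    AltCycle E where
  n := n
  two_le := hn
  edge k := e (k : Fin n)
  vert k := v (k : Fin n)
  edge_periodic k := by simp
  vert_periodic k := by simp
  mem k := hmem _
  inj i hi j hj h := by
    simpa [Fin.ext_iff, Nat.mod_eq_of_lt hi, Nat.mod_eq_of_lt hj] using hinj h
  ends_eq k := by simpa using hends (k : Fin n)
  alt k := by simpa using halt (k : Fin n)

theorem edges_ofFin [DecidableEq V] {E : Finset (MEdge V)} (n : ℕ) [NeZero n] (hn : 2 ≤ n)
    (e : Fin n → MEdge V) (v : Fin n → V) (hmem : ∀ k, e k ∈ E) (hinj : Function.Injective e)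
    (hends : ∀ k, (e k).ends = s(v k, v (k + 1))) (halt : ∀ k, (e k).lab = !(e (k + 1)).lab) :
    (ofFin n hn e v hmem hinj hends halt).edges = univ.image e := by
  ext x
  simp only [edges, ofFin, mem_image, mem_range, mem_univ, true_and]
  constructor
  · rintro ⟨k, -, rfl⟩
    exact ⟨k, rfl⟩
  · rintro ⟨k, rfl⟩
    exact ⟨k, k.isLt, by simp⟩

end AltCycle

section mEdges

variable [DecidableEq V] {A0 A1 : Finset (Hyperarc V)}

theorem mem_mEdges {e : MEdge V} :
    e ∈ mEdges A0 A1 ↔ e.arc ∈ (if e.lab then A0 \ A1 else A1 \ A0) := by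
  obtain ⟨l, t, x⟩ := e
  cases l <;> simp [mEdges, MEdge.arc]

theorem lab_eq_of_mem_mEdges {l l' : Bool} {t : Tail} {x : Sym2 V}
    (h : (⟨l, t, x⟩ : MEdge V) ∈ mEdges A0 A1) (h' : (⟨l', t, x⟩ : MEdge V) ∈ mEdges A0 A1) :
    l = l' := by
  rw [mem_mEdges] at h h'
  cases l <;> cases l' <;> simp_all [MEdge.arc]

theorem card_mEdges : (mEdges A0 A1).card = ((A0 \ A1) ∪ (A1 \ A0)).card := by
  have hinj (l : Bool) : Function.Injective fun h : Hyperarc V => (⟨l, h.1, h.2⟩ : MEdge V) :=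
    fun x y hxy => by cases x; cases y; simp_all
  rw [mEdges, card_union_of_disjoint, card_union_of_disjoint disjoint_sdiff_sdiff,
    card_image_of_injective _ (hinj true), card_image_of_injective _ (hinj false)]
  simp only [disjoint_left, mem_image]
  rintro _ ⟨x, -, rfl⟩ ⟨y, -, hy⟩
  simp at hy

end mEdges

section quadEdges

variable [DecidableEq V] {a b c d : V} {t s : Tail}

def quadEdges (a b c d : V) (t s : Tail) : Finset (MEdge V) :=
  {⟨true, t, s(a, b)⟩, ⟨false, t, s(b, c)⟩, ⟨true, s, s(c, d)⟩, ⟨false, s, s(a, d)⟩}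

theorem sum_quadEdges {M : Type*} [AddCommMonoid M] (f : MEdge V → M)
    (h13 : (⟨true, t, s(a, b)⟩ : MEdge V) ≠ ⟨true, s, s(c, d)⟩)
    (h24 : (⟨false, t, s(b, c)⟩ : MEdge V) ≠ ⟨false, s, s(a, d)⟩) :
    ∑ e ∈ quadEdges a b c d t s, f e =
      f ⟨true, t, s(a, b)⟩ + f ⟨false, t, s(b, c)⟩ + f ⟨true, s, s(c, d)⟩ +
        f ⟨false, s, s(a, d)⟩ := by
  rw [quadEdges, sum_insert (by simp [h13]), sum_insert (by simp [h24]),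
    sum_insert (by simp), sum_singleton]
  abel

theorem card_quadEdges
    (h13 : (⟨true, t, s(a, b)⟩ : MEdge V) ≠ ⟨true, s, s(c, d)⟩)
    (h24 : (⟨false, t, s(b, c)⟩ : MEdge V) ≠ ⟨false, s, s(a, d)⟩) :
    (quadEdges a b c d t s).card = 4 := by
  rw [card_eq_sum_ones, sum_quadEdges _ h13 h24]

theorem AltCycle.exists_edges_eq_quadEdges {E : Finset (MEdge V)}
    (hE : quadEdges a b c d t s ⊆ E)
    (h13 : (⟨true, t, s(a, b)⟩ : MEdge V) ≠ ⟨true, s, s(c, d)⟩)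
    (h24 : (⟨false, t, s(b, c)⟩ : MEdge V) ≠ ⟨false, s, s(a, d)⟩) :
    ∃ Q : AltCycle E, Q.edges = quadEdges a b c d t s := by
  set e : Fin 4 → MEdge V :=
    ![⟨true, t, s(a, b)⟩, ⟨false, t, s(b, c)⟩, ⟨true, s, s(c, d)⟩, ⟨false, s, s(a, d)⟩]
  have himage : univ.image e = quadEdges a b c d t s := by
    ext x
    simp [e, quadEdges, Fin.exists_fin_succ, eq_comm]
  have hinj : Function.Injective e := by
    rw [← Set.injOn_univ, ← coe_univ, ← card_image_iff, himage, card_quadEdges h13 h24,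
      card_univ, Fintype.card_fin]
  refine ⟨AltCycle.ofFin 4 (by norm_num) e ![a, b, c, d] (fun k => hE ?_) hinj ?_ ?_, ?_⟩
  · exact himage ▸ mem_image_of_mem e (mem_univ k)
  · intro k; fin_cases k <;> simp [e, Sym2.eq_swap]
  · intro k; fin_cases k <;> rfl
  · rw [AltCycle.edges_ofFin, himage]

theorem labTailCount_eq_of_mEdges_eq_quadEdges {A0 A1 : Finset (Hyperarc V)}
    (h : mEdges A0 A1 = quadEdges a b c d t s)
    (h13 : (⟨true, t, s(a, b)⟩ : MEdge V) ≠ ⟨true, s, s(c, d)⟩)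
    (h24 : (⟨false, t, s(b, c)⟩ : MEdge V) ≠ ⟨false, s, s(a, d)⟩) (u : Tail) :
    labTailCount A0 A1 true u = labTailCount A0 A1 false u := by
  simp only [labTailCount, h, card_filter, sum_quadEdges _ h13 h24]
  simp

end quadEdges

section alternatingTrail

variable {a b c d : V} {t s : Tail}

theorem alternating_trail_second_ne_fourth (hab : a ≠ b)
    (h13 : (⟨true, t, s(a, b)⟩ : MEdge V) ≠ ⟨true, s, s(c, d)⟩) :
    (⟨false, t, s(b, c)⟩ : MEdge V) ≠ ⟨false, s, s(a, d)⟩ := by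
  intro h
  simp only [MEdge.mk.injEq, Sym2.eq_iff, true_and] at h
  obtain ⟨rfl, ⟨rfl, -⟩ | ⟨rfl, rfl⟩⟩ := h
  · exact hab rfl
  · exact h13 (by rw [Sym2.eq_swap])

theorem alternating_trail_first_ne_third [DecidableEq V] {A0 A1 : Finset (Hyperarc V)}
    (h1 : (⟨true, t, s(a, b)⟩ : MEdge V) ∈ mEdges A0 A1)
    (h2 : (⟨false, t, s(b, c)⟩ : MEdge V) ∈ mEdges A0 A1) (had : a ≠ d) :
    (⟨true, t, s(a, b)⟩ : MEdge V) ≠ ⟨true, s, s(c, d)⟩ := by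
  intro h
  simp only [MEdge.mk.injEq, Sym2.eq_iff, true_and] at h
  obtain ⟨-, ⟨rfl, -⟩ | ⟨rfl, -⟩⟩ := h
  · rw [Sym2.eq_swap] at h2
    simpa using lab_eq_of_mem_mEdges h1 h2
  · exact had rfl

end alternatingTrail

end

theorem one_cycle_case3_general {V : Type*} [DecidableEq V]
    (D : DegreeSeq V) (A0 A1 : Finset (Hyperarc V))
    (h0 : Realizes A0 D)
    (C : AltCycle (mEdges A0 A1)) (hmin : C.Minimal) (hall : C.edges = mEdges A0 A1)
    (a b c d : V) (t s : Tail) (i : ℕ)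
    (he1 : C.edge i = ⟨true, t, s(a, b)⟩)
    (he2 : C.edge (i + 1) = ⟨false, t, s(b, c)⟩)
    (he3 : C.edge (i + 2) = ⟨true, s, s(c, d)⟩)
    (had : a ≠ d)
    (he4 : (⟨false, s, s(a, d)⟩ : MEdge V) ∈ C.edges) :
    C.edges = {⟨true, t, s(a, b)⟩, ⟨false, t, s(b, c)⟩,
               ⟨true, s, s(c, d)⟩, ⟨false, s, s(a, d)⟩} ∧
    ((A0 \ A1) ∪ (A1 \ A0)).card = 4 ∧
    labTailCount A0 A1 true true = labTailCount A0 A1 false true ∧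
    HypershuffleAdj A0 A1 := by
  have hm1 := he1 ▸ C.mem i
  have hm2 := he2 ▸ C.mem (i + 1)
  have hm3 := he3 ▸ C.mem (i + 2)
  have hab : a ≠ b := by
    simpa [MEdge.arc] using h0.1 _ (mem_sdiff.1 (mem_mEdges.1 hm1)).1
  have h13 := alternating_trail_first_ne_third (s := s) hm1 hm2 had
  have h24 := alternating_trail_second_ne_fourth hab h13
  have hsub : quadEdges a b c d t s ⊆ mEdges A0 A1 := by
    simp only [quadEdges, insert_subset_iff, singleton_subset_iff]
    exact ⟨hm1, hm2, hm3, hall ▸ he4⟩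
  obtain ⟨Q, hQ⟩ := AltCycle.exists_edges_eq_quadEdges hsub h13 h24
  have hC : C.edges = quadEdges a b c d t s := by
    rw [← hQ, hmin Q (by rw [hQ, hall]; exact hsub)]
  have hM : mEdges A0 A1 = quadEdges a b c d t s := hall ▸ hC
  have hcard : ((A0 \ A1) ∪ (A1 \ A0)).card = 4 := by
    rw [← card_mEdges, hM, card_quadEdges h13 h24]
  have hcount := labTailCount_eq_of_mEdges_eq_quadEdges hM h13 h24 true
  exact ⟨hC, hcard, hcount, hcard, ⟨C, hall⟩, hcount⟩

/-- Case 3 of the proof of Lemma `connected_when_one_cycle`.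
`M(H0 Δ H*)` is exactly one minimal alternating cycle `C*` with subtrail
`(e1, e2, e3)`, `e1 = {a,b}_{H0,t}`, `e2 = {b,c}_{H*,t}`, `e3 = {c,d}_{H0,s}`,
`a ≠ d`.  If `e4 = {a,d}_{H*,s}` belongs to `C*`, then
`C* = (e1, e2, e3, e4)`, so `|A(H0) Δ A(H*)| = 4`, the numbers of tail-τ edges
labeled `H0` and labeled `H*` agree, and `H0`, `H*` are adjacent in
`G(H^stub_s(d))`. -/
theorem one_cycle_case3 {V : Type*} [DecidableEq V]
    (D : DegreeSeq V) (A0 A1 : Finset (Hyperarc V))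
    (h0 : Realizes A0 D) (h1 : Realizes A1 D)
    (C : AltCycle (mEdges A0 A1)) (hmin : C.Minimal) (hall : C.edges = mEdges A0 A1)
    (a b c d : V) (t s : Tail) (i : ℕ)
    (he1 : C.edge i = ⟨true, t, s(a, b)⟩)
    (he2 : C.edge (i + 1) = ⟨false, t, s(b, c)⟩)
    (he3 : C.edge (i + 2) = ⟨true, s, s(c, d)⟩)
    (had : a ≠ d)
    (he4 : (⟨false, s, s(a, d)⟩ : MEdge V) ∈ C.edges) :
    C.edges = {⟨true, t, s(a, b)⟩, ⟨false, t, s(b, c)⟩,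
               ⟨true, s, s(c, d)⟩, ⟨false, s, s(a, d)⟩} ∧
    ((A0 \ A1) ∪ (A1 \ A0)).card = 4 ∧
    labTailCount A0 A1 true true = labTailCount A0 A1 false true ∧
    HypershuffleAdj A0 A1 :=
  one_cycle_case3_general D A0 A1 h0 C hmin hall a b c d t s i he1 he2 he3 had he4
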